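/- arXiv:0705.3744 — 3 statements merged into one kernel-verified Lean document; each statement's English description precedes it below -/
import Mathlib

section
/- Fix θ ∈ (0, π/2) and a unit speed curve f on the hyperboloid. For F(u,v) = (cosh(u cos θ) f + sinh(u cos θ) f ⊠ f', u sin θ), the vector ξ(u,v) = (-sin θ [sinh(u cos θ) f(v) + cosh(u cos θ) f(v) ⊠ f'(v)], cos θ) is a unit vector (in the product metric dx² + dy² - dz² + dt²) orthogonal to both F_u and F_v, and its inner product with ∂_t = (0,0,0,1) is the constant cos θ. -/
open Real

def mink (x y : Fin 3 → ℝ) : ℝ := x 0 * y 0 + x 1 * y 1 - x 2 * y 2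

def lcross (a b : Fin 3 → ℝ) : Fin 3 → ℝ :=
  ![a 1 * b 2 - a 2 * b 1, a 2 * b 0 - a 0 * b 2, a 1 * b 0 - a 0 * b 1]

theorem xi_is_constant_angle_normal (θ : ℝ) (hθ : θ ∈ Set.Ioo 0 (π/2))
    (f p q : ℝ → Fin 3 → ℝ) (κ : ℝ → ℝ)
    (hp : ∀ v j, HasDerivAt (fun t => f t j) (p v j) v)
    (hq : ∀ v j, HasDerivAt (fun t => p t j) (q v j) v)
    (hff : ∀ v, mink (f v) (f v) = -1)
    (hpp : ∀ v, mink (p v) (p v) = 1)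
    (hdec : ∀ v, q v = fun j => f v j + κ v * lcross (f v) (p v) j) :
    ∀ u v,
      let ξ3 : Fin 3 → ℝ := fun j =>
        -Real.sin θ * (Real.sinh (u * Real.cos θ) * f v j +
          Real.cosh (u * Real.cos θ) * lcross (f v) (p v) j)
      let Fu3 : Fin 3 → ℝ := fun j =>
        Real.cos θ * (Real.sinh (u * Real.cos θ) * f v j +
          Real.cosh (u * Real.cos θ) * lcross (f v) (p v) j)
      let Fv3 : Fin 3 → ℝ := fun j =>
        (Real.cosh (u * Real.cos θ) - κ v * Real.sinh (u * Real.cos θ)) * p v j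
      -- ξ is unit
      mink ξ3 ξ3 + Real.cos θ * Real.cos θ = 1 ∧
      -- ξ ⟂ F_u
      mink ξ3 Fu3 + Real.cos θ * Real.sin θ = 0 ∧
      -- ξ ⟂ F_v
      mink ξ3 Fv3 + Real.cos θ * 0 = 0 ∧
      -- constant angle with ∂_t = (0,0,0,1)
      mink ξ3 (fun _ => 0) + Real.cos θ * 1 = Real.cos θ := by
  intro u v ξ3 Fu3 Fv3
  have hc : mink (f v) (p v) = 0 := by
    have h1 : HasDerivAt (fun t => mink (f t) (f t))
        (p v 0 * f v 0 + f v 0 * p v 0 + (p v 1 * f v 1 + f v 1 * p v 1)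
          - (p v 2 * f v 2 + f v 2 * p v 2)) v := by
      simp only [mink]
      exact (((hp v 0).mul (hp v 0)).add ((hp v 1).mul (hp v 1))).sub
        ((hp v 2).mul (hp v 2))
    have h2 : HasDerivAt (fun t => mink (f t) (f t)) 0 v := by
      have : (fun t : ℝ => mink (f t) (f t)) = fun _ => (-1 : ℝ) := funext hff
      rw [this]; exact hasDerivAt_const v (-1)
    have := h1.unique h2
    simp only [mink]; nlinarith [this]
  have hff' := hff v
  have hpp' := hpp v
  have hch := Real.cosh_sq_sub_sinh_sq (u * Real.cos θ)
  have hsc := Real.sin_sq_add_cos_sq θ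
  simp only [mink, lcross, Matrix.cons_val_zero, Matrix.cons_val_one, Matrix.head_cons,
    Matrix.cons_val_two, Matrix.tail_cons] at hff' hpp' hc
  have hfc : f v 0 * (f v 1 * p v 2 - f v 2 * p v 1)
      + f v 1 * (f v 2 * p v 0 - f v 0 * p v 2)
      - f v 2 * (f v 1 * p v 0 - f v 0 * p v 1) = 0 := by ring
  have hpc : p v 0 * (f v 1 * p v 2 - f v 2 * p v 1)
      + p v 1 * (f v 2 * p v 0 - f v 0 * p v 2)
      - p v 2 * (f v 1 * p v 0 - f v 0 * p v 1) = 0 := by ring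
  have hcc : (f v 1 * p v 2 - f v 2 * p v 1) * (f v 1 * p v 2 - f v 2 * p v 1)
      + (f v 2 * p v 0 - f v 0 * p v 2) * (f v 2 * p v 0 - f v 0 * p v 2)
      - (f v 1 * p v 0 - f v 0 * p v 1) * (f v 1 * p v 0 - f v 0 * p v 1) = 1 := by
    linear_combination (f v 0 * p v 0 + f v 1 * p v 1 - f v 2 * p v 2) * hc
      - (p v 0 * p v 0 + p v 1 * p v 1 - p v 2 * p v 2) * hff' + hpp'
  set S := Real.sin θ
  set Co := Real.cos θ
  set sh := Real.sinh (u * Co)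
  set ch := Real.cosh (u * Co)
  simp only [ξ3, Fu3, Fv3, mink, lcross, Matrix.cons_val_zero, Matrix.cons_val_one,
    Matrix.head_cons, Matrix.cons_val_two, Matrix.tail_cons]
  refine ⟨?_, ?_, ?_, ?_⟩
  · linear_combination (S^2*sh^2) * hff' + (2*S^2*sh*ch) * hfc + (S^2*ch^2) * hcc
      + S^2 * hch + hsc
  · linear_combination (-S*Co*sh^2) * hff' + (-2*S*Co*sh*ch) * hfc + (-S*Co*ch^2) * hcc
      + (-S*Co) * hch
  · linear_combination (-S*(ch - κ v * sh)*sh) * hc + (-S*(ch - κ v * sh)*ch) * hpc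
  · ring
end

section
/- With F as above, the first component (in R^3) of F(u,v), namely P(u,v) = cosh(u cos θ) f(v) + sinh(u cos θ) f(v) ⊠ f'(v), satisfies <P,P> = -1 and P3(u,v) > 0 whenever f3 > 0; i.e., F maps into H × R. -/
open Real

/-! Differentiating `⟨f, f⟩ = -1` gives `f' ⟂ f`, so `f ⊠ f'` is a unit spacelike vector orthogonal
to the unit timelike vector `f`, and `P = cosh t • f + sinh t • (f ⊠ f')` is a hyperbolic rotation of
`f` in the plane they span, so it stays on the hyperboloid. It stays on the upper sheet because the
time component of a unit vector `w` orthogonal to `f` satisfies `w₃² ≤ f₃² - 1`, which makes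
`|sinh t · w₃| < cosh t · f₃`. -/

lemma mink_lcross_left (a b : Fin 3 → ℝ) : mink a (lcross a b) = 0 := by
  simp only [mink, lcross, Matrix.cons_val_zero, Matrix.cons_val_one, Matrix.cons_val]
  ring

lemma mink_lcross_self (a b : Fin 3 → ℝ) :
    mink (lcross a b) (lcross a b) = mink a b ^ 2 - mink a a * mink b b := by
  simp only [mink, lcross, Matrix.cons_val_zero, Matrix.cons_val_one, Matrix.cons_val]
  ring

lemma mink_add_smul_self (a b : ℝ) (x y : Fin 3 → ℝ) :
    mink (a • x + b • y) (a • x + b • y) =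
      a ^ 2 * mink x x + 2 * a * b * mink x y + b ^ 2 * mink y y := by
  simp only [mink, Pi.add_apply, Pi.smul_apply, smul_eq_mul]
  ring

lemma hasDerivAt_mink_self {f : ℝ → Fin 3 → ℝ} {p : Fin 3 → ℝ} {v : ℝ}
    (hf : ∀ j, HasDerivAt (fun t => f t j) (p j) v) :
    HasDerivAt (fun t => mink (f t) (f t)) (2 * mink (f v) p) v := by
  refine ((((hf 0).mul (hf 0)).add ((hf 1).mul (hf 1))).sub ((hf 2).mul (hf 2))).congr_deriv ?_
  simp only [mink]
  ring

lemma mink_eq_zero_of_mink_self_const {f : ℝ → Fin 3 → ℝ} {p : Fin 3 → ℝ} {v c : ℝ}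
    (hf : ∀ j, HasDerivAt (fun t => f t j) (p j) v) (hc : ∀ t, mink (f t) (f t) = c) :
    mink (f v) p = 0 := by
  have hconst : HasDerivAt (fun t => mink (f t) (f t)) 0 v := by
    simpa only [hc] using hasDerivAt_const v c
  linarith [(hasDerivAt_mink_self hf).unique hconst]

lemma sq_apply_two_le_of_mink_eq_zero {x y : Fin 3 → ℝ} (hx : mink x x = -1)
    (hxy : mink x y = 0) : y 2 ^ 2 ≤ mink y y * (x 2 ^ 2 - 1) := by
  simp only [mink] at *
  have lagrange : x 2 ^ 2 * y 2 ^ 2 + (x 0 * y 1 - x 1 * y 0) ^ 2 =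
      (x 0 ^ 2 + x 1 ^ 2) * (y 0 ^ 2 + y 1 ^ 2) := by
    linear_combination -(x 0 * y 0 + x 1 * y 1 + x 2 * y 2) * hxy
  nlinarith [sq_nonneg (x 0 * y 1 - x 1 * y 0)]

lemma mink_cosh_sinh_self {x y : Fin 3 → ℝ} (hx : mink x x = -1) (hxy : mink x y = 0)
    (hy : mink y y = 1) (t : ℝ) :
    mink (cosh t • x + sinh t • y) (cosh t • x + sinh t • y) = -1 := by
  rw [mink_add_smul_self, hx, hxy, hy]
  linear_combination -cosh_sq_sub_sinh_sq t

lemma cosh_sinh_apply_two_pos {x y : Fin 3 → ℝ} (hx : mink x x = -1) (hxy : mink x y = 0)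
    (hy : mink y y = 1) (hx2 : 0 < x 2) (t : ℝ) : 0 < cosh t * x 2 + sinh t * y 2 := by
  have hy2 := sq_apply_two_le_of_mink_eq_zero hx hxy
  rw [hy, one_mul] at hy2
  have hsq : (sinh t * y 2) ^ 2 < (cosh t * x 2) ^ 2 := by
    nlinarith [cosh_sq_sub_sinh_sq t, sq_nonneg (sinh t), pow_pos hx2 2]
  have hlt := abs_lt_of_sq_lt_sq hsq (by positivity)
  linarith [neg_abs_le (sinh t * y 2)]

theorem F_maps_into_H_times_R (θ : ℝ) (f p : ℝ → Fin 3 → ℝ)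
    (hp : ∀ v j, HasDerivAt (fun t => f t j) (p v j) v)
    (hff : ∀ v, mink (f v) (f v) = -1)
    (hpp : ∀ v, mink (p v) (p v) = 1) :
    ∀ u v,
      let P : Fin 3 → ℝ := fun j =>
        Real.cosh (u * Real.cos θ) * f v j +
          Real.sinh (u * Real.cos θ) * lcross (f v) (p v) j
      mink P P = -1 ∧ (f v 2 > 0 → P 2 > 0) := by
  intro u v P
  have hfp : mink (f v) (p v) = 0 := mink_eq_zero_of_mink_self_const (hp v) hff
  have hfw : mink (f v) (lcross (f v) (p v)) = 0 := mink_lcross_left _ _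
  have hww : mink (lcross (f v) (p v)) (lcross (f v) (p v)) = 1 := by
    rw [mink_lcross_self, hfp, hff, hpp]
    norm_num
  exact ⟨mink_cosh_sinh_self (hff v) hfw hww _,
    fun hf2 => cosh_sinh_apply_two_pos (hff v) hfw hww hf2 _⟩
end

section
/- Fix θ ∈ (0, π/2), let f be a unit speed curve on the hyperboloid with geodesic curvature κ, and let F(u,v) = (cosh(u cos θ) f + sinh(u cos θ) f ⊠ f', u sin θ). Then the induced metric coefficients are E = <F_u, F_u> = 1, F_{coef} = <F_u, F_v> = 0, and G = <F_v, F_v> = (cosh(u cos θ) − κ(v) sinh(u cos θ))², where <·,·> is the product metric dx² + dy² − dz² + dt². -/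
open Real

theorem mink_def (x y : Fin 3 → ℝ) : mink x y = x 0 * y 0 + x 1 * y 1 - x 2 * y 2 := rfl
theorem lcross0 (a b : Fin 3 → ℝ) : lcross a b 0 = a 1 * b 2 - a 2 * b 1 := rfl
theorem lcross1 (a b : Fin 3 → ℝ) : lcross a b 1 = a 2 * b 0 - a 0 * b 2 := rfl
theorem lcross2 (a b : Fin 3 → ℝ) : lcross a b 2 = a 1 * b 0 - a 0 * b 1 := rfl

theorem induced_metric_coefficients (θ : ℝ) (hθ : θ ∈ Set.Ioo 0 (π/2))
    (f p q : ℝ → Fin 3 → ℝ) (κ : ℝ → ℝ)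
    (hp : ∀ v j, HasDerivAt (fun t => f t j) (p v j) v)
    (hq : ∀ v j, HasDerivAt (fun t => p t j) (q v j) v)
    (hff : ∀ v, mink (f v) (f v) = -1)
    (hpp : ∀ v, mink (p v) (p v) = 1)
    (hdec : ∀ v, q v = fun j => f v j + κ v * lcross (f v) (p v) j) :
    ∀ u v,
      let Fu3 : Fin 3 → ℝ := fun j =>
        Real.cos θ * (Real.sinh (u * Real.cos θ) * f v j +
          Real.cosh (u * Real.cos θ) * lcross (f v) (p v) j)
      let Fv3 : Fin 3 → ℝ := fun j =>
        (Real.cosh (u * Real.cos θ) - κ v * Real.sinh (u * Real.cos θ)) * p v j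
      -- Fu3 is the u-partial of the R^3-part, sin θ that of the R-part
      (∀ j, HasDerivAt
        (fun t => Real.cosh (t * Real.cos θ) * f v j +
          Real.sinh (t * Real.cos θ) * lcross (f v) (p v) j) (Fu3 j) u) ∧
      -- Fv3 is the v-partial of the R^3-part, 0 that of the R-part
      (∀ j, HasDerivAt
        (fun t => Real.cosh (u * Real.cos θ) * f t j +
          Real.sinh (u * Real.cos θ) * lcross (f t) (p t) j) (Fv3 j) v) ∧
      -- E = 1
      mink Fu3 Fu3 + Real.sin θ * Real.sin θ = 1 ∧
      -- F = 0
      mink Fu3 Fv3 + Real.sin θ * 0 = 0 ∧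
      -- G = (cosh(u cos θ) − κ sinh(u cos θ))²
      mink Fv3 Fv3 + 0 * 0 =
        (Real.cosh (u * Real.cos θ) - κ v * Real.sinh (u * Real.cos θ))^2 := by
  -- orthogonality of f and p, componentwise
  have horth : ∀ w, f w 0 * p w 0 + f w 1 * p w 1 - f w 2 * p w 2 = 0 := by
    intro w
    have h1 : HasDerivAt (fun t => f t 0 * f t 0 + f t 1 * f t 1 - f t 2 * f t 2)
        ((p w 0 * f w 0 + f w 0 * p w 0 + (p w 1 * f w 1 + f w 1 * p w 1))
          - (p w 2 * f w 2 + f w 2 * p w 2)) w :=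
      (((hp w 0).mul (hp w 0)).add ((hp w 1).mul (hp w 1))).sub ((hp w 2).mul (hp w 2))
    have h2 : HasDerivAt (fun t => f t 0 * f t 0 + f t 1 * f t 1 - f t 2 * f t 2) 0 w := by
      have he : (fun t => f t 0 * f t 0 + f t 1 * f t 1 - f t 2 * f t 2)
          = fun _ => (-1 : ℝ) := funext fun t => hff t
      rw [he]; exact hasDerivAt_const w (-1)
    have h3 := h1.unique h2
    linear_combination h3 / 2
  intro u v
  have hf : f v 0 * f v 0 + f v 1 * f v 1 - f v 2 * f v 2 = -1 := hff v
  have hp2 : p v 0 * p v 0 + p v 1 * p v 1 - p v 2 * p v 2 = 1 := hpp v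
  have ho := horth v
  have hcs : Real.cosh (u * Real.cos θ) ^ 2 - Real.sinh (u * Real.cos θ) ^ 2 = 1 :=
    Real.cosh_sq_sub_sinh_sq _
  have hsc : Real.sin θ ^ 2 + Real.cos θ ^ 2 = 1 := Real.sin_sq_add_cos_sq θ
  have hq0 : q v 0 = f v 0 + κ v * (f v 1 * p v 2 - f v 2 * p v 1) := by rw [hdec v]; rfl
  have hq1 : q v 1 = f v 1 + κ v * (f v 2 * p v 0 - f v 0 * p v 2) := by rw [hdec v]; rfl
  have hq2 : q v 2 = f v 2 + κ v * (f v 1 * p v 0 - f v 0 * p v 1) := by rw [hdec v]; rfl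
  have hder1 : ∀ j, HasDerivAt
      (fun t => Real.cosh (t * Real.cos θ) * f v j +
        Real.sinh (t * Real.cos θ) * lcross (f v) (p v) j)
      (Real.cos θ * (Real.sinh (u * Real.cos θ) * f v j +
        Real.cosh (u * Real.cos θ) * lcross (f v) (p v) j)) u := by
    intro j
    have h1 : HasDerivAt (fun t : ℝ => t * Real.cos θ) (Real.cos θ) u := by
      simpa using (hasDerivAt_id u).mul_const (Real.cos θ)
    have h := (h1.cosh.mul_const (f v j)).add (h1.sinh.mul_const (lcross (f v) (p v) j))
    rw [show Real.cos θ * (Real.sinh (u * Real.cos θ) * f v j +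
        Real.cosh (u * Real.cos θ) * lcross (f v) (p v) j)
      = Real.sinh (u * Real.cos θ) * Real.cos θ * f v j +
        Real.cosh (u * Real.cos θ) * Real.cos θ * lcross (f v) (p v) j from by ring]
    exact h
  have hder2 : ∀ j, HasDerivAt
      (fun t => Real.cosh (u * Real.cos θ) * f t j +
        Real.sinh (u * Real.cos θ) * lcross (f t) (p t) j)
      ((Real.cosh (u * Real.cos θ) - κ v * Real.sinh (u * Real.cos θ)) * p v j) v := by
    intro j
    fin_cases j
    · have h : HasDerivAt (fun t => Real.cosh (u * Real.cos θ) * f t 0 +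
          Real.sinh (u * Real.cos θ) * (f t 1 * p t 2 - f t 2 * p t 1))
          (Real.cosh (u * Real.cos θ) * p v 0 +
            Real.sinh (u * Real.cos θ) * ((p v 1 * p v 2 + f v 1 * q v 2)
              - (p v 2 * p v 1 + f v 2 * q v 1))) v :=
        ((hp v 0).const_mul (Real.cosh (u * Real.cos θ))).add
          ((((hp v 1).mul (hq v 2)).sub ((hp v 2).mul (hq v 1))).const_mul
            (Real.sinh (u * Real.cos θ)))
      have hval : (Real.cosh (u * Real.cos θ) - κ v * Real.sinh (u * Real.cos θ)) * p v 0
          = Real.cosh (u * Real.cos θ) * p v 0 +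
            Real.sinh (u * Real.cos θ) * ((p v 1 * p v 2 + f v 1 * q v 2)
              - (p v 2 * p v 1 + f v 2 * q v 1)) := by
        linear_combination (-(Real.sinh (u * Real.cos θ) * f v 1)) * hq2
          + (Real.sinh (u * Real.cos θ) * f v 2) * hq1
          + (-(Real.sinh (u * Real.cos θ) * κ v * p v 0)) * hf
          + (Real.sinh (u * Real.cos θ) * κ v * f v 0) * ho
      show HasDerivAt (fun t => Real.cosh (u * Real.cos θ) * f t 0 +
        Real.sinh (u * Real.cos θ) * lcross (f t) (p t) 0)
        ((Real.cosh (u * Real.cos θ) - κ v * Real.sinh (u * Real.cos θ)) * p v 0) v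
      rw [hval]
      exact h
    · have h : HasDerivAt (fun t => Real.cosh (u * Real.cos θ) * f t 1 +
          Real.sinh (u * Real.cos θ) * (f t 2 * p t 0 - f t 0 * p t 2))
          (Real.cosh (u * Real.cos θ) * p v 1 +
            Real.sinh (u * Real.cos θ) * ((p v 2 * p v 0 + f v 2 * q v 0)
              - (p v 0 * p v 2 + f v 0 * q v 2))) v :=
        ((hp v 1).const_mul (Real.cosh (u * Real.cos θ))).add
          ((((hp v 2).mul (hq v 0)).sub ((hp v 0).mul (hq v 2))).const_mul
            (Real.sinh (u * Real.cos θ)))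
      have hval : (Real.cosh (u * Real.cos θ) - κ v * Real.sinh (u * Real.cos θ)) * p v 1
          = Real.cosh (u * Real.cos θ) * p v 1 +
            Real.sinh (u * Real.cos θ) * ((p v 2 * p v 0 + f v 2 * q v 0)
              - (p v 0 * p v 2 + f v 0 * q v 2)) := by
        linear_combination (-(Real.sinh (u * Real.cos θ) * f v 2)) * hq0
          + (Real.sinh (u * Real.cos θ) * f v 0) * hq2
          + (-(Real.sinh (u * Real.cos θ) * κ v * p v 1)) * hf
          + (Real.sinh (u * Real.cos θ) * κ v * f v 1) * ho
      show HasDerivAt (fun t => Real.cosh (u * Real.cos θ) * f t 1 +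
        Real.sinh (u * Real.cos θ) * lcross (f t) (p t) 1)
        ((Real.cosh (u * Real.cos θ) - κ v * Real.sinh (u * Real.cos θ)) * p v 1) v
      rw [hval]
      exact h
    · have h : HasDerivAt (fun t => Real.cosh (u * Real.cos θ) * f t 2 +
          Real.sinh (u * Real.cos θ) * (f t 1 * p t 0 - f t 0 * p t 1))
          (Real.cosh (u * Real.cos θ) * p v 2 +
            Real.sinh (u * Real.cos θ) * ((p v 1 * p v 0 + f v 1 * q v 0)
              - (p v 0 * p v 1 + f v 0 * q v 1))) v :=
        ((hp v 2).const_mul (Real.cosh (u * Real.cos θ))).add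
          ((((hp v 1).mul (hq v 0)).sub ((hp v 0).mul (hq v 1))).const_mul
            (Real.sinh (u * Real.cos θ)))
      have hval : (Real.cosh (u * Real.cos θ) - κ v * Real.sinh (u * Real.cos θ)) * p v 2
          = Real.cosh (u * Real.cos θ) * p v 2 +
            Real.sinh (u * Real.cos θ) * ((p v 1 * p v 0 + f v 1 * q v 0)
              - (p v 0 * p v 1 + f v 0 * q v 1)) := by
        linear_combination (-(Real.sinh (u * Real.cos θ) * f v 1)) * hq0
          + (Real.sinh (u * Real.cos θ) * f v 0) * hq1
          + (-(Real.sinh (u * Real.cos θ) * κ v * p v 2)) * hf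
          + (Real.sinh (u * Real.cos θ) * κ v * f v 2) * ho
      show HasDerivAt (fun t => Real.cosh (u * Real.cos θ) * f t 2 +
        Real.sinh (u * Real.cos θ) * lcross (f t) (p t) 2)
        ((Real.cosh (u * Real.cos θ) - κ v * Real.sinh (u * Real.cos θ)) * p v 2) v
      rw [hval]
      exact h
  refine ⟨hder1, hder2, ?_, ?_, ?_⟩
  · simp only [mink_def, lcross0, lcross1, lcross2]
    linear_combination (Real.cos θ ^ 2 * Real.sinh (u * Real.cos θ) ^ 2
        - Real.cos θ ^ 2 * Real.cosh (u * Real.cos θ) ^ 2 *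
          (p v 0 * p v 0 + p v 1 * p v 1 - p v 2 * p v 2)) * hf
      + (Real.cos θ ^ 2 * Real.cosh (u * Real.cos θ) ^ 2) * hp2
      + (Real.cos θ ^ 2 * Real.cosh (u * Real.cos θ) ^ 2 *
          (f v 0 * p v 0 + f v 1 * p v 1 - f v 2 * p v 2)) * ho
      + Real.cos θ ^ 2 * hcs + hsc
  · simp only [mink_def, lcross0, lcross1, lcross2]
    linear_combination (Real.cos θ * (Real.cosh (u * Real.cos θ)
      - κ v * Real.sinh (u * Real.cos θ)) * Real.sinh (u * Real.cos θ)) * ho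
  · simp only [mink_def, lcross0, lcross1, lcross2]
    linear_combination ((Real.cosh (u * Real.cos θ) - κ v * Real.sinh (u * Real.cos θ)) ^ 2) * hp2
end
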